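/- arXiv:2311.12215 — 3 statements merged into one kernel-verified Lean document; each statement's English description precedes it below -/
import Mathlib

section
/- A sequence (a₁,...,a_n) of nonnegative integers is the bump sequence of some permutation in S_n if and only if it is a weak ballot sequence, i.e., for all nonnegative integers i < j and all k ≤ n, the number of indices ℓ ≤ k with a_ℓ = i is at least the number of indices ℓ ≤ k with a_ℓ = j. -/
/-- Insert `k` into a (weakly increasing) row; return the new row and the bumped entry, if any. -/
def rowInsert : List ℕ → ℕ → List ℕ × Option ℕ
  | [], k => ([k], none)
  | x :: xs, k =>
      if k < x then (k :: xs, some x)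
      else
        let r := rowInsert xs k
        (x :: r.1, r.2)

/-- RS insertion of `k` into a tableau (list of rows); returns the new tableau
and the number of bumps caused by this insertion. -/
def tabInsert : List (List ℕ) → ℕ → List (List ℕ) × ℕ
  | [], k => ([[k]], 0)
  | r :: rs, k =>
      match rowInsert r k with
      | (r', none) => (r' :: rs, 0)
      | (r', some y) =>
          let t := tabInsert rs y
          (r' :: t.1, t.2 + 1)

/-- The RS insertion tableau `P` of a word together with the total number of bumps. -/
def rsAux (w : List ℕ) : List (List ℕ) × ℕ :=
  w.foldl (fun p k => let t := tabInsert p.1 k; (t.1, p.2 + t.2)) ([], 0)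

/-- The total number of bumps occurring when the RS algorithm is applied to the word `w`. -/
def bumpCount (w : List ℕ) : ℕ := (rsAux w).2

/-- The shape of the RS insertion tableau of `w`, as the list of row lengths. -/
def rsShape (w : List ℕ) : List ℕ := ((rsAux w).1).map List.length

/-- The bump sequence: the number of bumps caused by each successive insertion. -/
def bumpSeq (w : List ℕ) : List ℕ :=
  (w.foldl (fun (p : List (List ℕ) × List ℕ) k =>
    let t := tabInsert p.1 k; (t.1, p.2 ++ [t.2])) ([], [])).2

/-- The one-line word (with values in `{1,…,n}`) of a permutation of `Fin n`. -/
def ofPerm {n : ℕ} (π : Equiv.Perm (Fin n)) : List ℕ :=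
  List.ofFn (fun i => (π i : ℕ) + 1)

/-- A weak ballot sequence: at every prefix, each smaller value has occurred at least
as often as each larger value. -/
def IsWeakBallot (a : List ℕ) : Prop :=
  ∀ i j k : ℕ, i < j → k ≤ a.length →
    (a.take k).count j ≤ (a.take k).count i

/-!
Among the first `m` bumps, the number equal to `s` is the length of row `s` of the insertion
tableau after `m` letters. Insertion keeps the tableau column strict, so these lengths decrease
with `s`: every bump sequence is a weak ballot sequence.

Conversely, a weak ballot sequence `a` prescribes that step `k` creates a cell in row `a k` and
column `c k`, the number of earlier occurrences of `a k`. Rank the steps by column, and within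
a column by decreasing time. When the resulting permutation is inserted, the letter of step `k`
exceeds every entry in earlier columns and is smaller than every entry already in column `c k`,
so it bumps straight down that column and creates its cell in row `a k`.
-/

namespace RSK

lemma rowInsert_cons (x : ℕ) (xs : List ℕ) (k : ℕ) :
    rowInsert (x :: xs) k =
      if k < x then (k :: xs, some x) else (x :: (rowInsert xs k).1, (rowInsert xs k).2) := rfl

lemma rowInsert_of_forall_le {R : List ℕ} {k : ℕ} (h : ∀ x ∈ R, x ≤ k) :
    rowInsert R k = (R ++ [k], none) := by
  induction R with
  | nil => rfl
  | cons x xs ih =>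
    simp only [List.mem_cons, forall_eq_or_imp] at h
    simp [rowInsert_cons, h.1.not_gt, ih h.2]

lemma rowInsert_of_lt_getElem {R : List ℕ} {k p : ℕ} (hp : p < R.length)
    (hbefore : ∀ q (hq : q < p), R[q] ≤ k) (hk : k < R[p]) :
    rowInsert R k = (R.set p k, some R[p]) := by
  induction R generalizing p with
  | nil => simp at hp
  | cons x xs ih =>
    cases p with
    | zero => simp_all [rowInsert_cons]
    | succ p =>
      have hx : ¬ k < x := (hbefore 0 (Nat.succ_pos p)).not_gt
      rw [rowInsert_cons, if_neg hx,
        ih (Nat.lt_of_succ_lt_succ hp) (fun q hq => hbefore (q + 1) (by omega)) hk]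
      rfl

lemma lt_of_rowInsert_eq_some {R R' : List ℕ} {k y : ℕ} (h : rowInsert R k = (R', some y)) :
    k < y := by
  induction R generalizing R' with
  | nil => simp [rowInsert] at h
  | cons x xs ih =>
    rw [rowInsert_cons] at h
    split_ifs at h with hkx
    · simp_all
    · exact ih (R' := (rowInsert xs k).1) (Prod.ext rfl (Prod.ext_iff.1 h).2)

lemma eq_append_of_rowInsert_eq_none {R R' : List ℕ} {k : ℕ}
    (h : rowInsert R k = (R', none)) : R' = R ++ [k] := by
  induction R generalizing R' with
  | nil => simp_all [rowInsert]
  | cons x xs ih =>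
    rw [rowInsert_cons] at h
    split_ifs at h
    · simp at h
    · obtain ⟨rfl, h2⟩ := Prod.ext_iff.1 h
      simp [ih (Prod.ext rfl h2)]

lemma length_rowInsert (R : List ℕ) (k : ℕ) :
    (rowInsert R k).1.length = R.length + if (rowInsert R k).2 = none then 1 else 0 := by
  induction R with
  | nil => rfl
  | cons x xs ih =>
    rw [rowInsert_cons]
    split_ifs <;> simp_all

lemma rowInsert_perm (R : List ℕ) (k : ℕ) :
    ((rowInsert R k).1 ++ (rowInsert R k).2.toList).Perm (k :: R) := by
  induction R with
  | nil => rfl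
  | cons x xs ih =>
    rw [rowInsert_cons]
    split_ifs
    · simp
    · exact (ih.cons x).trans (List.Perm.swap k x xs)

/-! ### Column-strict tableaux -/

/-- Row `S` may stand directly below row `R` in a column-strict tableau. -/
def RowLt : List ℕ → List ℕ → Prop
  | _, [] => True
  | [], _ :: _ => False
  | x :: xs, z :: zs => x < z ∧ RowLt xs zs

@[simp] lemma rowLt_nil (R : List ℕ) : RowLt R [] := by cases R <;> trivial

@[simp] lemma rowLt_cons_cons (x z : ℕ) (xs zs : List ℕ) :
    RowLt (x :: xs) (z :: zs) ↔ x < z ∧ RowLt xs zs := Iff.rfl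

lemma RowLt.length_le {R S : List ℕ} (h : RowLt R S) : S.length ≤ R.length := by
  induction R generalizing S with
  | nil => cases S <;> simp_all [RowLt]
  | cons x xs ih =>
    cases S with
    | nil => simp
    | cons z zs => simpa using ih h.2

lemma RowLt.getElem_lt {R S : List ℕ} (h : RowLt R S) (j : ℕ) (hj : j < S.length) :
    R[j]'(hj.trans_le h.length_le) < S[j] := by
  induction R generalizing S j with
  | nil => cases S with
    | nil => simp at hj
    | cons => exact h.elim
  | cons x xs ih =>
    cases S with
    | nil => simp at hj
    | cons z zs =>
      cases j with
      | zero => exact h.1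
      | succ j => exact ih h.2 j (Nat.lt_of_succ_lt_succ hj)

lemma RowLt.append_left {R S : List ℕ} (h : RowLt R S) (l : List ℕ) : RowLt (R ++ l) S := by
  induction R generalizing S with
  | nil => cases S <;> simp_all [RowLt]
  | cons x xs ih => cases S <;> simp_all

/-- Bumping only lowers entries of a row. -/
lemma RowLt.of_rowInsert_eq_some {R R' S : List ℕ} {k y : ℕ} (h : RowLt R S)
    (hins : rowInsert R k = (R', some y)) : RowLt R' S := by
  induction R generalizing R' S with
  | nil => simp [rowInsert] at hins
  | cons x xs ih =>
    cases S with
    | nil => simp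
    | cons z zs =>
      rw [rowInsert_cons] at hins
      split_ifs at hins with hkx
      · simp only [Prod.mk.injEq] at hins
        obtain ⟨rfl, -⟩ := hins
        exact ⟨hkx.trans h.1, h.2⟩
      · obtain ⟨rfl, hy⟩ := Prod.ext_iff.1 hins
        exact ⟨h.1, ih h.2 (Prod.ext rfl hy)⟩

/-- If `y` is bumped from position `p` of `R`, it lands in `S` at a position `≤ p`, below an
entry of `R'` that is at most `k < y`. -/
lemma RowLt.rowInsert_bumped {R R' S : List ℕ} {k y : ℕ} (h : RowLt R S)
    (hins : rowInsert R k = (R', some y)) : RowLt R' (rowInsert S y).1 := by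
  induction R generalizing R' S with
  | nil => simp [rowInsert] at hins
  | cons x xs ih =>
    rw [rowInsert_cons] at hins
    split_ifs at hins with hkx
    · simp only [Prod.mk.injEq, Option.some.injEq] at hins
      obtain ⟨rfl, rfl⟩ := hins
      cases S with
      | nil => simpa [rowInsert] using hkx
      | cons z zs => simpa [rowInsert_cons, h.1] using ⟨hkx, h.2⟩
    · obtain ⟨rfl, hy⟩ := Prod.ext_iff.1 hins
      have hky : k < y := lt_of_rowInsert_eq_some (Prod.ext rfl hy)
      have hxy : x < y := (not_lt.1 hkx).trans_lt hky
      cases S with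
      | nil => simpa [rowInsert] using hxy
      | cons z zs =>
        rw [rowInsert_cons]
        split_ifs with hyz
        · exact ⟨hxy, h.2.of_rowInsert_eq_some (Prod.ext rfl hy)⟩
        · exact ⟨h.1, ih h.2 (Prod.ext rfl hy)⟩

lemma tabInsert_cons (R : List ℕ) (rs : List (List ℕ)) (k : ℕ) :
    tabInsert (R :: rs) k =
      match rowInsert R k with
      | (R', none) => (R' :: rs, 0)
      | (R', some y) => (R' :: (tabInsert rs y).1, (tabInsert rs y).2 + 1) := rfl

lemma headD_tabInsert (T : List (List ℕ)) (k : ℕ) :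
    (tabInsert T k).1.headD [] = (rowInsert (T.headD []) k).1 := by
  cases T with
  | nil => rfl
  | cons R rs =>
    rw [tabInsert_cons]
    rcases hins : rowInsert R k with ⟨R', _ | y⟩ <;> simp [hins]

def IsColStrict (T : List (List ℕ)) : Prop := T.IsChain RowLt

lemma isColStrict_nil : IsColStrict [] := List.isChain_nil

lemma isColStrict_cons {R : List ℕ} {rs : List (List ℕ)} :
    IsColStrict (R :: rs) ↔ RowLt R (rs.headD []) ∧ IsColStrict rs := by
  cases rs <;> simp [IsColStrict]

lemma isColStrict_tabInsert {T : List (List ℕ)} (hT : IsColStrict T) (k : ℕ) :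
    IsColStrict (tabInsert T k).1 := by
  induction T generalizing k with
  | nil => exact List.isChain_singleton _
  | cons R rs ih =>
    rw [isColStrict_cons] at hT
    rw [tabInsert_cons]
    rcases hins : rowInsert R k with ⟨R', _ | y⟩
    · rw [eq_append_of_rowInsert_eq_none hins]
      exact isColStrict_cons.2 ⟨hT.1.append_left _, hT.2⟩
    · exact isColStrict_cons.2
        ⟨headD_tabInsert rs y ▸ hT.1.rowInsert_bumped hins, ih hT.2 y⟩

lemma flatten_tabInsert_perm (T : List (List ℕ)) (k : ℕ) :
    (tabInsert T k).1.flatten.Perm (k :: T.flatten) := by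
  induction T generalizing k with
  | nil => simp [tabInsert]
  | cons R rs ih =>
    have hperm := rowInsert_perm R k
    rw [tabInsert_cons]
    rcases hins : rowInsert R k with ⟨R', _ | y⟩
    · simp only [hins, Option.toList_none, List.append_nil] at hperm
      simpa using hperm.append_right rs.flatten
    · simp only [hins, Option.toList_some] at hperm
      have hmid : (R' ++ y :: rs.flatten).Perm (k :: (R ++ rs.flatten)) := by
        simpa using hperm.append_right rs.flatten
      simpa using ((ih y).append_left R').trans hmid

def rowLength (T : List (List ℕ)) (s : ℕ) : ℕ := (T.map List.length).getD s 0

@[simp] lemma rowLength_nil (s : ℕ) : rowLength [] s = 0 := rfl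

@[simp] lemma rowLength_cons_zero (R : List ℕ) (rs : List (List ℕ)) :
    rowLength (R :: rs) 0 = R.length := rfl

@[simp] lemma rowLength_cons_succ (R : List ℕ) (rs : List (List ℕ)) (s : ℕ) :
    rowLength (R :: rs) (s + 1) = rowLength rs s := rfl

lemma rowLength_zero (T : List (List ℕ)) : rowLength T 0 = (T.headD []).length := by
  cases T <;> rfl

lemma rowLength_tabInsert (T : List (List ℕ)) (k s : ℕ) :
    rowLength (tabInsert T k).1 s =
      rowLength T s + if s = (tabInsert T k).2 then 1 else 0 := by
  induction T generalizing k s with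
  | nil => cases s <;> simp [tabInsert]
  | cons R rs ih =>
    have hlen := length_rowInsert R k
    rw [tabInsert_cons]
    rcases hins : rowInsert R k with ⟨R', _ | y⟩ <;> simp only [hins] at hlen ⊢ <;>
      cases s <;> simp [hlen, ih]

lemma IsColStrict.rowLength_antitone {T : List (List ℕ)} (hT : IsColStrict T) :
    Antitone (rowLength T) := by
  refine antitone_nat_of_succ_le fun s => ?_
  induction T generalizing s with
  | nil => simp
  | cons R rs ih =>
    rw [isColStrict_cons] at hT
    cases s with
    | zero => simpa [rowLength_zero] using hT.1.length_le
    | succ s => simpa using ih hT.2 s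

/-! ### Inserting a word -/

def insertWord (T : List (List ℕ)) (w : List ℕ) : List (List ℕ) :=
  w.foldl (fun T k => (tabInsert T k).1) T

def bumpSeqFrom : List (List ℕ) → List ℕ → List ℕ
  | _, [] => []
  | T, k :: ks => (tabInsert T k).2 :: bumpSeqFrom (tabInsert T k).1 ks

@[simp] lemma insertWord_nil (T : List (List ℕ)) : insertWord T [] = T := rfl

@[simp] lemma insertWord_cons (T : List (List ℕ)) (k : ℕ) (ks : List ℕ) :
    insertWord T (k :: ks) = insertWord (tabInsert T k).1 ks := rfl

@[simp] lemma insertWord_append (T : List (List ℕ)) (u v : List ℕ) :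
    insertWord T (u ++ v) = insertWord (insertWord T u) v := List.foldl_append

@[simp] lemma bumpSeqFrom_nil (T : List (List ℕ)) : bumpSeqFrom T [] = [] := rfl

@[simp] lemma bumpSeqFrom_cons (T : List (List ℕ)) (k : ℕ) (ks : List ℕ) :
    bumpSeqFrom T (k :: ks) = (tabInsert T k).2 :: bumpSeqFrom (tabInsert T k).1 ks := rfl

@[simp] lemma bumpSeqFrom_singleton (T : List (List ℕ)) (k : ℕ) :
    bumpSeqFrom T [k] = [(tabInsert T k).2] := rfl

@[simp] lemma bumpSeqFrom_append (T : List (List ℕ)) (u v : List ℕ) :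
    bumpSeqFrom T (u ++ v) = bumpSeqFrom T u ++ bumpSeqFrom (insertWord T u) v := by
  induction u generalizing T with
  | nil => rfl
  | cons k ks ih => simp [ih]

lemma bumpSeq_eq_bumpSeqFrom (w : List ℕ) : bumpSeq w = bumpSeqFrom [] w := by
  suffices ∀ (T : List (List ℕ)) (l : List ℕ),
      w.foldl (fun (p : List (List ℕ) × List ℕ) k =>
        let t := tabInsert p.1 k; (t.1, p.2 ++ [t.2])) (T, l) =
        (insertWord T w, l ++ bumpSeqFrom T w) from by
    simp [bumpSeq, this]
  induction w with
  | nil => simp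
  | cons k ks ih => intro T l; simp [ih]

lemma take_bumpSeqFrom (T : List (List ℕ)) (w : List ℕ) (m : ℕ) :
    (bumpSeqFrom T w).take m = bumpSeqFrom T (w.take m) := by
  induction w generalizing T m with
  | nil => simp
  | cons k ks ih => cases m <;> simp [ih]

lemma isColStrict_insertWord {T : List (List ℕ)} (hT : IsColStrict T) (w : List ℕ) :
    IsColStrict (insertWord T w) := by
  induction w generalizing T with
  | nil => exact hT
  | cons k ks ih => exact ih (isColStrict_tabInsert hT k)

lemma rowLength_insertWord (T : List (List ℕ)) (w : List ℕ) (s : ℕ) :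
    rowLength (insertWord T w) s = rowLength T s + (bumpSeqFrom T w).count s := by
  induction w generalizing T with
  | nil => simp
  | cons k ks ih =>
    rw [insertWord_cons, ih, rowLength_tabInsert, bumpSeqFrom_cons, List.count_cons]
    simp only [beq_iff_eq, eq_comm (a := (tabInsert T k).2)]
    omega

lemma rowLength_insertWord_nil (w : List ℕ) (s : ℕ) :
    rowLength (insertWord [] w) s = (bumpSeqFrom [] w).count s := by
  simp [rowLength_insertWord]

lemma flatten_insertWord_perm (T : List (List ℕ)) (w : List ℕ) :
    (insertWord T w).flatten.Perm (w ++ T.flatten) := by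
  induction w generalizing T with
  | nil => simp
  | cons k ks ih =>
    exact (ih _).trans (((flatten_tabInsert_perm T k).append_left ks).trans List.perm_middle)

theorem isWeakBallot_bumpSeq (w : List ℕ) : IsWeakBallot (bumpSeq w) := by
  intro i j m hij _
  rw [bumpSeq_eq_bumpSeqFrom, take_bumpSeqFrom, ← rowLength_insertWord_nil,
    ← rowLength_insertWord_nil]
  exact (isColStrict_insertWord isColStrict_nil _).rowLength_antitone hij.le

/-! ### Insertion down a column -/

/-- Every entry `v` of `T` lies in column `β v`. -/
def IsGraded (β : ℕ → ℕ) (T : List (List ℕ)) : Prop := ∀ R ∈ T, R.map β = List.range R.length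

lemma apply_getElem_of_map_eq_range {β : ℕ → ℕ} {R : List ℕ}
    (h : R.map β = List.range R.length) (j : ℕ) (hj : j < R.length) : β R[j] = j := by
  have := List.getElem_of_eq h (by simpa using hj)
  rwa [List.getElem_map, List.getElem_range] at this

lemma map_set_of_apply_eq {β : ℕ → ℕ} {R : List ℕ} {c x : ℕ} {hc : c < R.length}
    (h : β x = β R[c]) : (R.set c x).map β = R.map β := by
  refine List.ext_getElem (by simp) fun i _ _ => ?_
  simp only [List.getElem_map, List.getElem_set]
  split_ifs with hci
  · subst hci; exact h
  · rfl

lemma getElem_lt_of_map_eq_range {β : ℕ → ℕ} (hβ : Monotone β) {R : List ℕ}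
    (hR : R.map β = List.range R.length) {x j : ℕ} (hj : j < β x) (hjR : j < R.length) :
    R[j] < x :=
  hβ.reflect_lt (by rwa [apply_getElem_of_map_eq_range hR])

lemma rowInsert_of_map_eq_range_of_length_eq {β : ℕ → ℕ} (hβ : Monotone β) {R : List ℕ}
    (hR : R.map β = List.range R.length) {x : ℕ} (hlen : R.length = β x) :
    rowInsert R x = (R ++ [x], none) :=
  rowInsert_of_forall_le fun z hz => by
    obtain ⟨j, hj, rfl⟩ := List.getElem_of_mem hz
    exact (getElem_lt_of_map_eq_range hβ hR (hlen ▸ hj) hj).le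

lemma rowInsert_of_map_eq_range_of_lt_length {β : ℕ → ℕ} (hβ : Monotone β) {R : List ℕ}
    (hR : R.map β = List.range R.length) {x : ℕ} (hc : β x < R.length) (htop : x < R[β x]) :
    rowInsert R x = (R.set (β x) x, some R[β x]) :=
  rowInsert_of_lt_getElem hc (fun _ hq => (getElem_lt_of_map_eq_range hβ hR hq _).le) htop

/-- Every entry left of column `β x` lies in an earlier column, hence is smaller than `x`;
so `x` travels straight down column `β x`. -/
theorem tabInsert_of_isGraded {β : ℕ → ℕ} (hβ : Monotone β) {T : List (List ℕ)}
    (hT : IsColStrict T) (hgr : IsGraded β T) {x h : ℕ} (hlen : rowLength T h = β x)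
    (habove : ∀ i < h, β x < rowLength T i) (htop : 0 < h → x < (T.headD []).getD (β x) 0) :
    (tabInsert T x).2 = h ∧ IsGraded β (tabInsert T x).1 := by
  induction T generalizing x h with
  | nil =>
    obtain rfl : h = 0 := by
      by_contra hh
      simpa using habove 0 (Nat.pos_of_ne_zero hh)
    exact ⟨rfl, by simp [tabInsert, IsGraded, ← hlen]⟩
  | cons R rs ih =>
    rw [isColStrict_cons] at hT
    have hR : R.map β = List.range R.length := hgr R List.mem_cons_self
    have hrs : IsGraded β rs := fun S hS => hgr S (List.mem_cons_of_mem _ hS)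
    cases h with
    | zero =>
      rw [rowLength_cons_zero] at hlen
      have hins := rowInsert_of_map_eq_range_of_length_eq hβ hR hlen
      refine ⟨by simp [tabInsert_cons, hins], ?_⟩
      simp only [tabInsert_cons, hins]
      intro S hS
      rcases List.mem_cons.1 hS with rfl | hS
      · simp [hR, hlen, List.range_succ]
      · exact hrs S hS
    | succ h =>
      have hc : β x < R.length := habove 0 (Nat.succ_pos h)
      have hins := rowInsert_of_map_eq_range_of_lt_length hβ hR hc
        (by simpa only [List.headD_cons, List.getD_eq_getElem _ _ hc] using htop h.succ_pos)
      have hβy : β R[β x] = β x := apply_getElem_of_map_eq_range hR _ hc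
      have htop' (hh : 0 < h) : R[β x] < (rs.headD []).getD (β R[β x]) 0 := by
        have hc' : β x < (rs.headD []).length := by
          simpa [rowLength_zero] using habove 1 (by omega)
        rw [hβy, List.getD_eq_getElem _ _ hc']
        exact hT.1.getElem_lt (β x) hc'
      obtain ⟨hbump, hgr'⟩ := ih hT.2 hrs (by simpa [hβy] using hlen)
        (fun i hi => by simpa [hβy] using habove (i + 1) (by omega)) htop'
      refine ⟨by simp [tabInsert_cons, hins, hbump], ?_⟩
      simp only [tabInsert_cons, hins]
      intro S hS
      rcases List.mem_cons.1 hS with rfl | hS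
      · rw [map_set_of_apply_eq hβy.symm, hR, List.length_set]
      · exact hgr' S hS

/-! ### Realising a ballot sequence -/

/-- The column of the cell that the recording tableau of `a` receives at step `k`. -/
def cellCol (a : List ℕ) (k : ℕ) : ℕ := (a.take k).count (a.getD k 0)

lemma cellCol_lt_count_of_isWeakBallot {a : List ℕ} (ha : IsWeakBallot a) {k i : ℕ}
    (hk : k < a.length) (hi : i < a[k]) : cellCol a k < (a.take k).count i := by
  have h := ha i a[k] (k + 1) hi hk
  simp only [List.take_succ_eq_append_getElem hk, List.count_append, List.count_singleton_self,
    List.count_singleton, beq_false_of_ne hi.ne', Bool.false_eq_true, if_false] at h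
  rw [cellCol, List.getD_eq_getElem _ _ hk]
  omega

/-- `β v` is the column that the value `v` will occupy in the insertion tableau. -/
structure IsColumnWord (a : List ℕ) (β : ℕ → ℕ) (w : List ℕ) : Prop where
  length_eq : w.length = a.length
  monotone : Monotone β
  apply_getElem : ∀ k (hk : k < w.length), β w[k] = cellCol a k
  getElem_lt : ∀ ℓ k (hℓ : ℓ < w.length) (hk : k < w.length),
    ℓ < k → cellCol a ℓ = cellCol a k → w[k] < w[ℓ]

lemma headD_mem {α : Type*} {T : List (List α)} (h : T.headD [] ≠ []) : T.headD [] ∈ T := by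
  cases T <;> simp_all

namespace IsColumnWord

variable {a w : List ℕ} {β : ℕ → ℕ}

lemma lt_headD_insertWord (hw : IsColumnWord a β w) {m : ℕ} (hm : m < w.length)
    (hgr : IsGraded β (insertWord [] (w.take m)))
    (hc : β w[m] < rowLength (insertWord [] (w.take m)) 0) :
    w[m] < ((insertWord [] (w.take m)).headD []).getD (β w[m]) 0 := by
  set R := (insertWord [] (w.take m)).headD []
  rw [rowLength_zero] at hc
  have hR : R ∈ insertWord [] (w.take m) := headD_mem (List.ne_nil_of_length_pos (by omega))
  have hmem : R[β w[m]] ∈ w.take m := by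
    simpa only [List.flatten_nil, List.append_nil] using (flatten_insertWord_perm [] _).subset
      (List.mem_flatten_of_mem hR (List.getElem_mem hc))
  obtain ⟨ℓ, hℓ, hℓv⟩ := List.getElem_of_mem hmem
  rw [List.length_take] at hℓ
  have hβv : β R[β w[m]] = β w[m] := apply_getElem_of_map_eq_range (hgr R hR) _ hc
  rw [List.getD_eq_getElem _ _ hc, ← hℓv, List.getElem_take]
  rw [← hℓv, List.getElem_take] at hβv
  refine hw.getElem_lt ℓ m (by omega) hm (by omega) ?_
  rw [← hw.apply_getElem ℓ (by omega), ← hw.apply_getElem m hm, hβv]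

/-- The ballot condition puts the bottom of column `cellCol a m` in row `a[m]`. -/
theorem bumpSeqFrom_eq (hw : IsColumnWord a β w) (ha : IsWeakBallot a) :
    bumpSeqFrom [] w = a := by
  suffices ∀ m ≤ w.length, bumpSeqFrom [] (w.take m) = a.take m ∧
      IsGraded β (insertWord [] (w.take m)) by
    have := (this w.length le_rfl).1
    rwa [List.take_length, hw.length_eq, List.take_length] at this
  intro m
  induction m with
  | zero => simp [IsGraded]
  | succ m ih =>
    intro hm
    obtain ⟨hbumps, hgr⟩ := ih (by omega)
    have hma : m < a.length := hw.length_eq ▸ hm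
    have hshape (s : ℕ) : rowLength (insertWord [] (w.take m)) s = (a.take m).count s := by
      rw [rowLength_insertWord_nil, hbumps]
    have hβ : β w[m] = (a.take m).count a[m] := by
      rw [hw.apply_getElem m hm, cellCol, List.getD_eq_getElem _ _ hma]
    have habove : ∀ i < a[m], β w[m] < rowLength (insertWord [] (w.take m)) i := fun i hi => by
      rw [hshape, hw.apply_getElem m hm]
      exact cellCol_lt_count_of_isWeakBallot ha hma hi
    obtain ⟨hstep, hgr'⟩ := tabInsert_of_isGraded hw.monotone
      (isColStrict_insertWord isColStrict_nil _) hgr (x := w[m]) (h := a[m])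
      (by rw [hshape, hβ]) habove fun hpos => hw.lt_headD_insertWord hm hgr (habove 0 hpos)
    rw [List.take_succ_eq_append_getElem hm, List.take_succ_eq_append_getElem hma,
      bumpSeqFrom_append, insertWord_append, hbumps, bumpSeqFrom_singleton, hstep]
    exact ⟨rfl, hgr'⟩

end IsColumnWord

theorem exists_isColumnWord_ofPerm (a : List ℕ) :
    ∃ (π : Equiv.Perm (Fin a.length)) (β : ℕ → ℕ), IsColumnWord a β (ofPerm π) := by
  set n := a.length
  let key : Fin n → ℕ ×ₗ (Fin n)ᵒᵈ := fun k => toLex (cellCol a k, OrderDual.toDual k)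
  let π : Equiv.Perm (Fin n) := (Tuple.sort key)⁻¹
  have hπ {i j : Fin n} (h : key i < key j) : π i < π j :=
    (Tuple.monotone_sort key).reflect_lt (by simpa [π] using h)
  -- the largest column of a letter `≤ v`, hence monotone
  let β : ℕ → ℕ := fun v => ({ℓ | (π ℓ : ℕ) + 1 ≤ v} : Finset (Fin n)).sup fun ℓ => cellCol a ℓ
  have hlen : (ofPerm π).length = n := List.length_ofFn
  have hget (k : ℕ) (hk : k < (ofPerm π).length) :
      (ofPerm π)[k] = (π ⟨k, hlen ▸ hk⟩ : ℕ) + 1 := List.getElem_ofFn ..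
  refine ⟨π, β, ⟨hlen, ?_, fun k hk => ?_, fun ℓ k hℓ hk hℓk hcol => ?_⟩⟩
  · intro v v' hvv'
    exact Finset.sup_mono fun ℓ hℓ => by
      simp only [Finset.mem_filter, Finset.mem_univ, true_and] at hℓ ⊢
      omega
  · rw [hget]
    refine le_antisymm (Finset.sup_le fun ℓ hℓ => ?_)
      (Finset.le_sup (f := fun ℓ : Fin n => cellCol a ℓ) (b := ⟨k, hlen ▸ hk⟩) (by simp))
    by_contra hlt
    have := hπ (i := ⟨k, hlen ▸ hk⟩) (j := ℓ) (Prod.Lex.toLex_lt_toLex.2 (Or.inl (not_le.1 hlt)))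
    simp only [Finset.mem_filter, Finset.mem_univ, true_and] at hℓ
    omega
  · rw [hget, hget]
    have := hπ (i := ⟨k, hlen ▸ hk⟩) (j := ⟨ℓ, hlen ▸ hℓ⟩)
      (Prod.Lex.toLex_lt_toLex.2 (Or.inr ⟨hcol.symm, hℓk⟩))
    simp only [Fin.lt_def] at this
    omega

end RSK

/-- A sequence of `n` nonnegative integers is the bump sequence of some
permutation in `S_n` if and only if it is a weak ballot sequence. -/
theorem bumpSeq_iff_weakBallot (n : ℕ) (a : List ℕ) (ha : a.length = n) :
    (∃ π : Equiv.Perm (Fin n), bumpSeq (ofPerm π) = a) ↔ IsWeakBallot a := by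
  refine ⟨fun ⟨π, hπ⟩ => hπ ▸ RSK.isWeakBallot_bumpSeq _, fun hb => ?_⟩
  subst ha
  obtain ⟨π, β, hw⟩ := RSK.exists_isColumnWord_ofPerm a
  exact ⟨π, by rw [RSK.bumpSeq_eq_bumpSeqFrom, hw.bumpSeqFrom_eq hb]⟩
end

section
/- For fixed n, the sequence a_k = (n!/(k!·k!·(n−2k)!))² / C(n−k+1,k)², for 1 ≤ k ≤ n/2, is log-concave: a_k² ≥ a_{k−1}·a_{k+1} for all valid k. -/
/-!
The summand is the square of the hook-length count `f k = n! (n - 2k + 1) / (k! (n - k + 1)!)`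
of standard Young tableaux of shape `(n - k, k)`, so it suffices that `f` is log-concave.
Consecutive terms satisfy `f (k + 1) = r k * f k` with
`r k = (n - 2k - 1)/(n - 2k + 1) · (n - k + 1)/(k + 1)`, a product of two positive factors that
both decrease in `k`; a sequence with decreasing ratios is log-concave.
-/

open Nat

/-- Hook-length formula for the number of standard Young tableaux of shape `(n - k, k)`. -/
def twoRowSYT (n k : ℕ) : ℚ := n ! * (n - 2 * k + 1 : ℕ) / (k ! * (n - k + 1)!)

def twoRowSYTRatio (n k : ℕ) : ℚ :=
  ((n - 2 * k - 1) / (n - 2 * k + 1)) * ((n - k + 1) / (k + 1))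

lemma twoRowSYT_nonneg (n k : ℕ) : 0 ≤ twoRowSYT n k := by
  unfold twoRowSYT
  positivity

lemma twoRowSYT_succ {n k : ℕ} (h : 2 * (k + 1) ≤ n) :
    twoRowSYT n (k + 1) = twoRowSYTRatio n k * twoRowSYT n k := by
  obtain ⟨m, rfl⟩ : ∃ m, n = 2 * k + 2 + m := ⟨n - (2 * k + 2), by omega⟩
  have hs : 2 * k + 2 + m - 2 * (k + 1) + 1 = m + 1 := by omega
  have hs' : 2 * k + 2 + m - 2 * k + 1 = m + 3 := by omega
  have ht : 2 * k + 2 + m - (k + 1) + 1 = k + m + 2 := by omega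
  have ht' : 2 * k + 2 + m - k + 1 = (k + m + 2) + 1 := by omega
  have hr : ((2 * k + 2 + m : ℕ) : ℚ) - 2 * k + 1 = m + 3 := by push_cast; ring
  simp only [twoRowSYT, twoRowSYTRatio, hs, hs', ht, ht', hr, factorial_succ]
  push_cast
  field_simp
  ring

lemma twoRowSYTRatio_succ_le {n k : ℕ} (h : 2 * (k + 1) ≤ n) :
    twoRowSYTRatio n (k + 1) ≤ twoRowSYTRatio n k := by
  have hn : (2 * (k + 1) : ℚ) ≤ n := by exact_mod_cast h
  unfold twoRowSYTRatio
  push_cast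
  apply mul_le_mul _ _ (div_nonneg (by linarith) (by positivity))
    (div_nonneg (by linarith) (by linarith))
  · rw [div_le_div_iff₀ (by linarith) (by linarith)]
    nlinarith
  · rw [div_le_div_iff₀ (by positivity) (by positivity)]
    nlinarith

lemma mul_le_sq_of_ratio_le {R : Type*} [CommSemiring R] [PartialOrder R] [IsOrderedRing R]
    {x y z r s : R} (hy : y = r * x) (hz : z = s * y) (hsr : s ≤ r) (hxy : 0 ≤ x * y) :
    x * z ≤ y ^ 2 :=
  calc x * z = s * (x * y) := by rw [hz]; ring
    _ ≤ r * (x * y) := mul_le_mul_of_nonneg_right hsr hxy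
    _ = y ^ 2 := by rw [sq, hy]; ring

lemma twoRowSYT_pred_mul_succ_le_sq {n k : ℕ} (hk : 1 ≤ k) (h : 2 * (k + 1) ≤ n) :
    twoRowSYT n (k - 1) * twoRowSYT n (k + 1) ≤ twoRowSYT n k ^ 2 := by
  obtain ⟨j, rfl⟩ : ∃ j, k = j + 1 := ⟨k - 1, by omega⟩
  exact mul_le_sq_of_ratio_le (twoRowSYT_succ (by omega)) (twoRowSYT_succ h)
    (twoRowSYTRatio_succ_le (by omega))
    (mul_nonneg (twoRowSYT_nonneg _ _) (twoRowSYT_nonneg _ _))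

lemma sq_div_choose_sq_eq_twoRowSYT_sq {n k : ℕ} (h : 2 * k ≤ n) :
    ((n ! : ℚ) / (k ! * k ! * (n - 2 * k)!)) ^ 2 / ((n - k + 1).choose k : ℚ) ^ 2
      = twoRowSYT n k ^ 2 := by
  rw [Nat.cast_choose ℚ (by omega : k ≤ n - k + 1),
    show n - k + 1 - k = n - 2 * k + 1 by omega, twoRowSYT, factorial_succ (n - 2 * k)]
  push_cast
  field_simp

/-- For fixed `n`, the sequence
`a_k = (n!/(k!·k!·(n-2k)!))² / C(n-k+1,k)²`, `1 ≤ k ≤ n/2`, is log-concave. -/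
theorem twoRow_syt_squares_log_concave (n : ℕ)
    (a : ℕ → ℚ)
    (ha : ∀ k, a k = (((n.factorial : ℚ) /
        ((k.factorial : ℚ) * (k.factorial : ℚ) * ((n - 2 * k).factorial : ℚ))) ^ 2) /
        (((n - k + 1).choose k : ℚ)) ^ 2) :
    ∀ k : ℕ, 1 ≤ k - 1 → k + 1 ≤ n / 2 → a (k - 1) * a (k + 1) ≤ a k ^ 2 := by
  intro k hk hkn
  have h : 2 * (k + 1) ≤ n := by omega
  have ha_sq (j : ℕ) (hj : 2 * j ≤ n) : a j = twoRowSYT n j ^ 2 :=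
    (ha j).trans (sq_div_choose_sq_eq_twoRowSYT_sq hj)
  rw [ha_sq (k - 1) (by omega), ha_sq k (by omega), ha_sq (k + 1) h, ← mul_pow]
  exact pow_le_pow_left₀ (mul_nonneg (twoRowSYT_nonneg _ _) (twoRowSYT_nonneg _ _))
    (twoRowSYT_pred_mul_succ_le_sq (by omega) h) 2
end

section
/- Let t_{n,i} be the number of partitions λ of n with Σⱼ(j−1)λⱼ = i. Then t_{n+j,n} ≤ t_{n+j+1,n} for all n,j ≥ 0, and for 0 ≤ i ≤ ⌊n/2⌋, t_{n,i} equals the coefficient of z^i in ∏_{k≥2} 1/(1 − z^{C(k,2)}) (in particular t_{n,i} is independent of n in this range). -/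
/-!
Write `r j` for the length of row `j` (counted from `0`) and `c k = r (k - 1) - r k` for the number
of columns of height `k`, so that `∑ⱼ j r j = ∑ₖ C(k,2) c k`. Lengthening the first row keeps the
bump, which gives the monotonicity. A partition of bump `i` has at most `i + 1` rows, and together
with `n` the counts `c k`, `k ≥ 2`, determine it. Conversely any `(c k)_{k ≥ 2}` with
`∑ₖ C(k,2) c k = i` comes from a partition of `n`, because the first row can absorb
`n - ∑ₖ k c k ≥ n - 2i ≥ 0`. So `t n i` counts these solutions, and that is the coefficient of
`zⁱ` in `∏ₖ 1/(1 - z^{C(k,2)})`.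
-/

/-- The parts of a partition of `n`, as a weakly decreasing list. -/
def partsList {n : ℕ} (p : n.Partition) : List ℕ :=
  (p.parts.sort (· ≤ ·)).reverse

/-- `bump` of a partition given by its weakly decreasing list of parts:
`∑ᵢ (i-1)λᵢ` (0-indexed rows, so weight `i` for row `i`). -/
def bumpOfParts (l : List ℕ) : ℕ :=
  ∑ i ∈ Finset.range l.length, i * l.getD i 0

/-- `t n i`: the number of partitions `λ ⊢ n` with `∑ⱼ(j-1)λⱼ = i`. -/
noncomputable def tStat (n i : ℕ) : ℕ :=
  Nat.card {p : n.Partition // bumpOfParts (partsList p) = i}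

open Finset

lemma List.sum_eq_sum_range_getD {M : Type*} [AddCommMonoid M] (l : List M) {N : ℕ}
    (hN : l.length ≤ N) : l.sum = ∑ j ∈ Finset.range N, l.getD j 0 := by
  induction l generalizing N with
  | nil => simp
  | cons a t ih =>
    obtain ⟨N, rfl⟩ : ∃ N', N = N' + 1 :=
      Nat.exists_eq_add_one_of_ne_zero (by rintro rfl; simp at hN)
    rw [Finset.sum_range_succ', List.sum_cons, ih (by simpa using hN), add_comm]
    simp

lemma antitone_piSingle_zero (c : ℕ) : Antitone (Pi.single 0 c : ℕ → ℕ) := by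
  intro a b hab
  rcases Nat.eq_zero_or_pos b with rfl | hb
  · simp [Nat.le_zero.1 hab]
  · simp [Pi.single_apply, hb.ne']

lemma sum_range_add_piSingle_zero (r : ℕ → ℕ) (c : ℕ) {N : ℕ} (hN : 0 < N) :
    ∑ j ∈ range N, (r + Pi.single 0 c : ℕ → ℕ) j = ∑ j ∈ range N, r j + c := by
  rw [Pi.add_def, sum_add_distrib, sum_pi_single', if_pos (mem_range.2 hN)]

lemma sum_range_mul_add_piSingle_zero (r : ℕ → ℕ) (c N : ℕ) :
    ∑ j ∈ range N, j * (r + Pi.single 0 c : ℕ → ℕ) j = ∑ j ∈ range N, j * r j :=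
  sum_congr rfl fun j _ => by rcases j with _ | j <;> simp

lemma sum_Ioc_tsub_of_antitone {r : ℕ → ℕ} (hr : Antitone r) {j K : ℕ} (hjK : j ≤ K) :
    ∑ k ∈ Ioc j K, (r (k - 1) - r k) = r j - r K := by
  induction K, hjK using Nat.le_induction with
  | base => simp
  | succ K hjK ih =>
    rw [sum_Ioc_succ_top hjK, ih, Nat.add_sub_cancel]
    have := hr hjK
    have : r (K + 1) ≤ r K := hr (Nat.le_add_right K 1)
    omega

lemma sum_range_mul_sum_Ioc {R : Type*} [NonUnitalNonAssocSemiring R] (f d : ℕ → R) (K : ℕ) :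
    ∑ j ∈ range K, f j * ∑ k ∈ Ioc j K, d k = ∑ k ∈ Icc 1 K, (∑ j ∈ range k, f j) * d k := by
  simp_rw [mul_sum, sum_mul]
  exact sum_comm' fun j k => by simp only [mem_range, mem_Ioc, mem_Icc]; omega

lemma sum_range_id_eq_choose_two (k : ℕ) : ∑ j ∈ range k, j = k.choose 2 := by
  rw [sum_range_id, Nat.choose_two_right]

lemma sum_Icc_one_choose_two_mul (g : ℕ → ℕ) (K : ℕ) :
    ∑ k ∈ Icc 1 K, k.choose 2 * g k = ∑ k ∈ Icc 2 K, k.choose 2 * g k := by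
  refine (sum_subset (Icc_subset_Icc_left one_le_two) fun k hk hk2 => ?_).symm
  rw [show k = 1 by simp only [mem_Icc] at hk hk2; omega]
  simp

lemma sum_range_mul_sum_Ioc_eq_sum_choose_two (d : ℕ → ℕ) (K : ℕ) :
    ∑ j ∈ range K, j * ∑ k ∈ Ioc j K, d k = ∑ k ∈ Icc 2 K, k.choose 2 * d k := by
  rw [sum_range_mul_sum_Ioc (fun j => j)]
  simp_rw [sum_range_id_eq_choose_two, sum_Icc_one_choose_two_mul]

section Rows

variable {n : ℕ}

lemma partsList_pairwise (p : n.Partition) : (partsList p).Pairwise (· ≥ ·) :=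
  List.pairwise_reverse.2 (p.parts.pairwise_sort _)

lemma coe_partsList (p : n.Partition) : (partsList p : Multiset ℕ) = p.parts := by
  rw [partsList, Multiset.coe_reverse, p.parts.sort_eq]

lemma partsList_injective : Function.Injective (partsList (n := n)) := fun p q h => by
  ext1; rw [← coe_partsList p, ← coe_partsList q, h]

lemma partsList_eq_of_coe {p : n.Partition} {l : List ℕ} (hl : l.Pairwise (· ≥ ·))
    (h : (l : Multiset ℕ) = p.parts) : partsList p = l :=
  List.Perm.eq_of_pairwise' (partsList_pairwise p) hl
    (by rw [← Multiset.coe_eq_coe, coe_partsList, h])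

def rowLen (p : n.Partition) (j : ℕ) : ℕ := (partsList p).getD j 0

lemma rowLen_eq_zero_iff {p : n.Partition} {j : ℕ} :
    rowLen p j = 0 ↔ (partsList p).length ≤ j := by
  refine ⟨fun h => not_lt.1 fun hj => ?_, List.getD_eq_default _ _⟩
  rw [rowLen, List.getD_eq_getElem _ _ hj] at h
  have hmem : (partsList p)[j] ∈ p.parts := coe_partsList p ▸ List.getElem_mem hj
  exact (p.parts_pos hmem).ne' h

lemma rowLen_antitone (p : n.Partition) : Antitone (rowLen p) := by
  intro j j' hjj'
  by_cases hj' : j' < (partsList p).length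
  · rw [rowLen, rowLen, List.getD_eq_getElem _ _ hj', List.getD_eq_getElem _ _ (hjj'.trans_lt hj')]
    rcases hjj'.eq_or_lt with rfl | hlt
    · rfl
    · exact (partsList_pairwise p).rel_get_of_lt (a := ⟨j, _⟩) (b := ⟨j', hj'⟩) hlt
  · rw [rowLen_eq_zero_iff.2 (not_lt.1 hj')]
    exact Nat.zero_le _

lemma rowLen_injective : Function.Injective (rowLen (n := n)) := by
  intro p q h
  have hlen : (partsList p).length = (partsList q).length := by
    apply le_antisymm <;> rw [← rowLen_eq_zero_iff]
    · rw [h, rowLen_eq_zero_iff]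
    · rw [← h, rowLen_eq_zero_iff]
  refine partsList_injective (List.ext_getElem hlen fun j hp hq => ?_)
  have := congrFun h j
  rwa [rowLen, rowLen, List.getD_eq_getElem _ _ hp, List.getD_eq_getElem _ _ hq] at this

lemma sum_range_rowLen {p : n.Partition} {N : ℕ} (hN : rowLen p N = 0) :
    ∑ j ∈ range N, rowLen p j = n := by
  unfold rowLen
  rw [← List.sum_eq_sum_range_getD _ (rowLen_eq_zero_iff.1 hN), ← Multiset.sum_coe,
    coe_partsList, p.parts_sum]

lemma bumpOfParts_eq_sum_range {p : n.Partition} {N : ℕ} (hN : rowLen p N = 0) :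
    bumpOfParts (partsList p) = ∑ j ∈ range N, j * rowLen p j := by
  refine sum_subset (range_subset_range.2 (rowLen_eq_zero_iff.1 hN)) fun j _ hj => ?_
  rw [List.getD_eq_default _ _ (by simpa using hj), mul_zero]

lemma mul_rowLen_le_bumpOfParts (p : n.Partition) (j : ℕ) :
    j * rowLen p j ≤ bumpOfParts (partsList p) := by
  by_cases hj : j < (partsList p).length
  · exact single_le_sum (f := fun j => j * rowLen p j) (fun _ _ => Nat.zero_le _) (mem_range.2 hj)
  · rw [rowLen_eq_zero_iff.2 (not_lt.1 hj), mul_zero]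
    exact Nat.zero_le _

lemma exists_rowLen_eq {r : ℕ → ℕ} (hr : Antitone r) {N : ℕ} (hN : r N = 0)
    (hsum : ∑ j ∈ range N, r j = n) : ∃ p : n.Partition, rowLen p = r := by
  classical
  have hex : ∃ M, r M = 0 := ⟨N, hN⟩
  set M := Nat.find hex
  have hr_pos : ∀ j < M, 0 < r j := fun j hj => Nat.pos_of_ne_zero (Nat.find_min hex hj)
  have hr_zero : ∀ j, M ≤ j → r j = 0 := fun j hj => Nat.le_zero.1 (Nat.find_spec hex ▸ hr hj)
  set l := (List.range M).map r
  have hl : ∀ j, l.getD j 0 = r j := by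
    intro j
    rcases lt_or_ge j M with hj | hj
    · rw [List.getD_eq_getElem _ _ (by simpa [l] using hj)]
      simp [l]
    · rw [List.getD_eq_default _ _ (by simpa [l] using hj), hr_zero j hj]
  let p : n.Partition :=
    { parts := l
      parts_pos := fun {a} ha => by
        obtain ⟨j, hj, rfl⟩ := List.mem_map.1 (Multiset.mem_coe.1 ha)
        exact hr_pos j (List.mem_range.1 hj)
      parts_sum := by
        rw [Multiset.sum_coe, List.sum_eq_sum_range_getD l (N := N) (by
          rw [List.length_map, List.length_range]; exact Nat.find_min' hex hN)]
        simpa only [hl] using hsum }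
  refine ⟨p, funext fun j => ?_⟩
  rw [rowLen, partsList_eq_of_coe (p := p) ?_ rfl, hl]
  exact List.pairwise_map.2 (List.pairwise_lt_range.imp fun h => hr h.le)

def colCount (p : n.Partition) (k : ℕ) : ℕ := rowLen p (k - 1) - rowLen p k

lemma rowLen_eq_sum_colCount {p : n.Partition} {N : ℕ} (hN : rowLen p N = 0) (j : ℕ) :
    rowLen p j = ∑ k ∈ Ioc j N, colCount p k := by
  rcases le_or_gt j N with hj | hj
  · simp only [colCount]
    rw [sum_Ioc_tsub_of_antitone (rowLen_antitone p) hj, hN, Nat.sub_zero]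
  · rw [Ioc_eq_empty (by omega), sum_empty]
    exact Nat.le_zero.1 (hN ▸ rowLen_antitone p hj.le)

lemma bumpOfParts_eq_sum_choose_two_mul_colCount {p : n.Partition} {N : ℕ}
    (hN : rowLen p N = 0) :
    bumpOfParts (partsList p) = ∑ k ∈ Icc 2 N, k.choose 2 * colCount p k := by
  simp_rw [bumpOfParts_eq_sum_range hN, rowLen_eq_sum_colCount hN,
    sum_range_mul_sum_Ioc_eq_sum_choose_two]

end Rows

theorem tStat_le_tStat_succ (m i : ℕ) : tStat m i ≤ tStat (m + 1) i := by
  have hN (p : m.Partition) : rowLen p ((partsList p).length + 1) = 0 :=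
    rowLen_eq_zero_iff.2 (Nat.le_succ _)
  have hext (p : m.Partition) : ∃ q : (m + 1).Partition, rowLen q = rowLen p + Pi.single 0 1 := by
    refine exists_rowLen_eq ((rowLen_antitone p).add (antitone_piSingle_zero 1))
      (N := (partsList p).length + 1) (by simp [hN p]) ?_
    rw [sum_range_add_piSingle_zero _ _ (Nat.succ_pos _), sum_range_rowLen (hN p)]
  choose f hf using hext
  refine Nat.card_le_card_of_injective (fun p => ⟨f p.1, ?_⟩) fun p p' h => ?_
  · have hfN : rowLen (f p.1) ((partsList p.1).length + 1) = 0 := by simp [hf, hN]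
    rw [bumpOfParts_eq_sum_range hfN, hf, sum_range_mul_add_piSingle_zero,
      ← bumpOfParts_eq_sum_range (hN p.1), p.2]
  · have := congrArg (fun q => rowLen q.1) h
    simp only [hf] at this
    exact Subtype.ext (rowLen_injective (add_right_cancel this))

lemma rowLen_eq_zero_of_bumpOfParts_lt {n K : ℕ} {p : n.Partition}
    (hK : bumpOfParts (partsList p) < K) : rowLen p K = 0 := by
  by_contra h
  have := mul_rowLen_le_bumpOfParts p K
  have := Nat.le_mul_of_pos_right K (Nat.pos_of_ne_zero h)
  omega

lemma eq_of_colCount_eq {n K : ℕ} {p q : n.Partition} (hp : rowLen p K = 0)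
    (hq : rowLen q K = 0) (h : ∀ k ∈ Icc 2 K, colCount p k = colCount q k) : p = q := by
  have hpos (j : ℕ) (hj : 0 < j) : rowLen p j = rowLen q j := by
    rw [rowLen_eq_sum_colCount hp, rowLen_eq_sum_colCount hq]
    exact sum_congr rfl fun k hk => h k (by simp only [mem_Ioc, mem_Icc] at hk ⊢; omega)
  have hp' : rowLen p (K + 1) = 0 := Nat.le_zero.1 (hp ▸ rowLen_antitone p K.le_succ)
  have hq' : rowLen q (K + 1) = 0 := Nat.le_zero.1 (hq ▸ rowLen_antitone q K.le_succ)
  have h0 : rowLen p 0 = rowLen q 0 := by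
    have := (sum_range_rowLen hp').trans (sum_range_rowLen hq').symm
    rw [sum_range_succ', sum_range_succ', sum_congr rfl fun j _ => hpos (j + 1) j.succ_pos] at this
    exact add_left_cancel this
  exact rowLen_injective (funext fun j => j.eq_zero_or_pos.elim (fun hj => hj ▸ h0) (hpos j))

noncomputable def colWeights {n : ℕ} (K : ℕ) (p : n.Partition) : ℕ →₀ ℕ :=
  Finsupp.indicator (Icc 2 K) fun k _ => k.choose 2 * colCount p k

lemma colWeights_apply_of_mem {n K k : ℕ} {p : n.Partition} (hk : k ∈ Icc 2 K) :
    colWeights K p k = k.choose 2 * colCount p k := by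
  simp [colWeights, Finsupp.indicator_apply, hk]

lemma colWeights_mem_finsuppAntidiag {n K : ℕ} {p : n.Partition}
    (hK : bumpOfParts (partsList p) < K) :
    colWeights K p ∈ finsuppAntidiag (Icc 2 K) (bumpOfParts (partsList p)) := by
  rw [mem_finsuppAntidiag,
    bumpOfParts_eq_sum_choose_two_mul_colCount (rowLen_eq_zero_of_bumpOfParts_lt hK)]
  exact ⟨sum_congr rfl fun k hk => colWeights_apply_of_mem hk, Finsupp.support_indicator_subset _ _⟩

lemma le_two_mul_choose_two {k : ℕ} (hk : 2 ≤ k) : k ≤ 2 * k.choose 2 := by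
  obtain ⟨m, rfl⟩ := Nat.exists_eq_add_of_le' hk
  simp [Nat.choose_succ_succ]
  omega

lemma exists_colWeights_eq {n i K : ℕ} (hi : 2 * i ≤ n) (hK : 0 < K) {l : ℕ →₀ ℕ}
    (hl : l ∈ finsuppAntidiag (Icc 2 K) i) (hdvd : ∀ k ∈ Icc 2 K, k.choose 2 ∣ l k) :
    ∃ p : n.Partition, bumpOfParts (partsList p) = i ∧ colWeights K p = l := by
  obtain ⟨hsum, hsupp⟩ := mem_finsuppAntidiag.1 hl
  have hl0 (k : ℕ) (hk : k ∉ Icc 2 K) : l k = 0 :=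
    Finsupp.notMem_support_iff.1 fun h => hk (hsupp h)
  set d : ℕ → ℕ := fun k => l k / k.choose 2
  have hd0 (k : ℕ) (hk : k ∉ Icc 2 K) : d k = 0 := by simp [d, hl0 k hk]
  have hd (k : ℕ) : k.choose 2 * d k = l k := by
    by_cases hk : k ∈ Icc 2 K
    · exact Nat.mul_div_cancel' (hdvd k hk)
    · rw [hd0 k hk, hl0 k hk, mul_zero]
  have hweight : ∑ k ∈ Icc 2 K, k.choose 2 * d k = i := by simp only [hd, hsum]
  set ρ : ℕ → ℕ := fun j => ∑ k ∈ Ioc j K, d k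
  set s := ∑ j ∈ range K, ρ j
  have hs : s ≤ n := by
    calc s = ∑ k ∈ Icc 1 K, k * d k := by
          simpa using sum_range_mul_sum_Ioc (fun _ => 1) d K
      _ ≤ ∑ k ∈ Icc 1 K, 2 * (k.choose 2 * d k) := by
          refine sum_le_sum fun k hk => ?_
          by_cases h2 : 2 ≤ k
          · rw [← mul_assoc]; exact Nat.mul_le_mul_right _ (le_two_mul_choose_two h2)
          · rw [hd0 k (by simp [h2])]; simp
      _ = 2 * i := by rw [← mul_sum, sum_Icc_one_choose_two_mul, hweight]
      _ ≤ n := hi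
  -- the first row absorbs what the columns of height `≥ 2` leave of `n`
  set r := ρ + Pi.single 0 (n - s)
  have hρ : Antitone ρ := fun j j' h => sum_le_sum_of_subset (Ioc_subset_Ioc_left h)
  have hr : Antitone r := hρ.add (antitone_piSingle_zero _)
  have hrK : r K = 0 := by simp [r, ρ, hK.ne']
  have hrsum : ∑ j ∈ range K, r j = n := by
    rw [sum_range_add_piSingle_zero _ _ hK]
    omega
  obtain ⟨p, hp⟩ := exists_rowLen_eq hr hrK hrsum
  refine ⟨p, ?_, ?_⟩
  · rw [bumpOfParts_eq_sum_range (hp ▸ hrK), hp, sum_range_mul_add_piSingle_zero, ← hweight,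
      sum_range_mul_sum_Ioc_eq_sum_choose_two]
  ext k
  by_cases hk : k ∈ Icc 2 K
  · rw [colWeights_apply_of_mem hk, ← hd k, colCount, hp]
    have hIoc : Ioc (k - 1) K = insert k (Ioc k K) := by
      ext x; simp only [mem_Ioc, mem_insert, mem_Icc] at hk ⊢; omega
    have hk0 : k ≠ 0 := by simp only [mem_Icc] at hk; omega
    have hk1 : k - 1 ≠ 0 := by simp only [mem_Icc] at hk; omega
    simp [r, ρ, hIoc, hk0, hk1]
  · simp [colWeights, Finsupp.indicator_apply, hk, hl0 k hk]

theorem tStat_eq_card {n i K : ℕ} (hi : 2 * i ≤ n) (hK : i < K) :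
    tStat n i =
      #{l ∈ finsuppAntidiag (Icc 2 K) i | ∀ k ∈ Icc 2 K, k.choose 2 ∣ (l : ℕ →₀ ℕ) k} := by
  rw [tStat, Nat.card_eq_fintype_card, Fintype.card_subtype]
  refine card_bij (fun p _ => colWeights K p) (fun p hp => ?_) (fun p hp q hq h => ?_)
    fun l hl => ?_
  · obtain ⟨-, rfl⟩ := mem_filter.1 hp
    exact mem_filter.2 ⟨colWeights_mem_finsuppAntidiag hK,
      fun k hk => colWeights_apply_of_mem hk ▸ dvd_mul_right _ _⟩
  · obtain ⟨-, hp⟩ := mem_filter.1 hp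
    obtain ⟨-, hq⟩ := mem_filter.1 hq
    refine eq_of_colCount_eq (rowLen_eq_zero_of_bumpOfParts_lt (hp ▸ hK))
      (rowLen_eq_zero_of_bumpOfParts_lt (hq ▸ hK)) fun k hk => ?_
    refine Nat.eq_of_mul_eq_mul_left (Nat.choose_pos (mem_Icc.1 hk).1) ?_
    rw [← colWeights_apply_of_mem hk, ← colWeights_apply_of_mem hk, h]
  · obtain ⟨hl, hdvd⟩ := mem_filter.1 hl
    obtain ⟨p, hp, rfl⟩ := exists_colWeights_eq hi (by omega) hl hdvd
    exact ⟨p, mem_filter.2 ⟨mem_univ _, hp⟩, rfl⟩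

section PowerSeries

open PowerSeries

lemma one_sub_X_pow_mul_mk_ite_dvd {R : Type*} [CommRing R] {c : ℕ} (hc : c ≠ 0) :
    (1 - X ^ c : R⟦X⟧) * PowerSeries.mk (fun m => if c ∣ m then 1 else 0) = 1 := by
  have : PowerSeries.mk (fun m => if c ∣ m then (1 : R) else 0) =
      expand c hc (PowerSeries.mk 1) := by
    ext m; simp [coeff_expand]
  rw [this, ← expand_X c hc, mul_comm]
  simpa using congrArg (expand c hc) (mk_one_mul_one_sub_eq_one R)

lemma coeff_eq_card_of_mul_prod_one_sub_X_pow {R ι : Type*} [CommRing R] [DecidableEq ι]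
    {s : Finset ι} {c : ι → ℕ} (hc : ∀ k ∈ s, c k ≠ 0) {F : R⟦X⟧}
    (hF : F * ∏ k ∈ s, (1 - X ^ c k) = 1) (i : ℕ) :
    coeff i F = #{l ∈ finsuppAntidiag s i | ∀ k ∈ s, c k ∣ l k} := by
  set G : ι → R⟦X⟧ := fun k => PowerSeries.mk fun m => if c k ∣ m then 1 else 0
  have hG : F = ∏ k ∈ s, G k := by
    calc F = F * ∏ k ∈ s, ((1 - X ^ c k) * G k) := by
          rw [prod_congr rfl fun k hk => one_sub_X_pow_mul_mk_ite_dvd (hc k hk), prod_const_one,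
            mul_one]
      _ = ∏ k ∈ s, G k := by rw [prod_mul_distrib, ← mul_assoc, hF, one_mul]
  rw [hG, coeff_prod]
  simp only [G, coeff_mk, prod_boole, sum_boole]

end PowerSeries

/- The infinite product is read through its truncations at `K ≥ i + 2`, which do not affect the
coefficient of `zⁱ`. -/
open PowerSeries in
/-- `t_{n+j,n} ≤ t_{n+j+1,n}` for all `n, j ≥ 0`; and for
`0 ≤ i ≤ ⌊n/2⌋`, `t_{n,i}` is the coefficient of `zⁱ` in `∏_{k≥2} 1/(1 - z^{C(k,2)})`
(the infinite product read through any sufficiently large truncation, which does not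
affect the coefficient of `zⁱ`; in particular `t_{n,i}` is independent of `n`). -/
theorem tStat_monotone_and_stable :
    (∀ n j : ℕ, tStat (n + j) n ≤ tStat (n + j + 1) n) ∧
    (∀ n i : ℕ, i ≤ n / 2 →
      ∀ K : ℕ, i + 2 ≤ K → ∀ F : PowerSeries ℚ,
        F * ∏ k ∈ Finset.Icc 2 K,
            (1 - (PowerSeries.X : PowerSeries ℚ) ^ k.choose 2) = 1 →
        (tStat n i : ℚ) = PowerSeries.coeff (R := ℚ) i F) := by
  refine ⟨fun n j => tStat_le_tStat_succ (n + j) n, fun n i hi K hK F hF => ?_⟩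
  rw [tStat_eq_card (by omega) (by omega : i < K),
    coeff_eq_card_of_mul_prod_one_sub_X_pow (fun k hk => (Nat.choose_pos (mem_Icc.1 hk).1).ne') hF]
end
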